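/- Let d ≥ 1 be an integer, let s be real with d−2 < s < d, let α > −1 be real, and let n ≥ 0 be an integer. Then all denominators 2n+s−2k−d (k ≥ 0) are nonzero, the series below converges absolutely, and ∑_{k=0}^∞ [(−α)_k/k!] · 1/(2n+s−2k−d) = −Γ(α+1) · Γ((d−s)/2−n)/(2 · Γ((d−s)/2−n+α+1)), where (−α)_k = (−α)(−α+1)⋯(−α+k−1) is the rising factorial. -/

import Mathlib

open Real

open Set MeasureTheory

/-- Rising factorial (Pochhammer symbol) `(x)_n = x(x+1)⋯(x+n−1)`. -/
noncomputable def rpoch (x : ℝ) (n : ℕ) : ℝ := ∏ i ∈ Finset.range n, (x + i)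

lemma rpoch_zero (x : ℝ) : rpoch x 0 = 1 := by simp [rpoch]

lemma rpoch_succ (x : ℝ) (n : ℕ) : rpoch x (n + 1) = rpoch x n * (x + n) := by
  simp [rpoch, Finset.prod_range_succ]

noncomputable def acoef (α : ℝ) (k : ℕ) : ℝ := rpoch (-α) k / k.factorial

lemma acoef_zero (α : ℝ) : acoef α 0 = 1 := by simp [acoef, rpoch_zero]

lemma acoef_succ (α : ℝ) (k : ℕ) :
    acoef α (k + 1) = acoef α k * (((k : ℝ) - α) / ((k : ℝ) + 1)) := by
  have hk : (k.factorial : ℝ) ≠ 0 := Nat.cast_ne_zero.2 k.factorial_ne_zero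
  simp only [acoef, rpoch_succ, Nat.factorial_succ]
  push_cast
  field_simp
  ring

lemma abs_acoef_le_poly (α : ℝ) (q : ℕ) (hq : |α| ≤ q) (k : ℕ) :
    |acoef α k| ≤ ((k : ℝ) + 1) ^ q := by
  induction k with
  | zero => simp [acoef_zero]
  | succ k ih =>
    have hk1 : (0:ℝ) < (k:ℝ) + 1 := by positivity
    have h1 : |acoef α (k+1)| = |acoef α k| * (|(k:ℝ) - α| / ((k:ℝ)+1)) := by
      rw [acoef_succ, abs_mul, abs_div, abs_of_pos hk1]
    have h2 : |(k:ℝ) - α| ≤ (k:ℝ) + q := by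
      have h3 : |(k:ℝ) - α| ≤ |(k:ℝ)| + |α| := abs_sub _ _
      have h4 : |(k:ℝ)| = (k:ℝ) := abs_of_nonneg (by positivity)
      nlinarith
    have key : ((k:ℝ) + 1) ^ q * (((k:ℝ) + q) / ((k:ℝ)+1)) ≤ ((k:ℝ) + 2) ^ q := by
      have e1 : ((k:ℝ)+2) = ((k:ℝ)+1) * (1 + 1/((k:ℝ)+1)) := by
        field_simp; ring
      have ha : (1:ℝ) + (q:ℝ) * (1/((k:ℝ)+1)) ≤ (1 + 1/((k:ℝ)+1)) ^ q := by
        have h := one_add_mul_le_pow (a := 1/((k:ℝ)+1)) (le_trans (by norm_num) (le_of_lt (by positivity : (0:ℝ) < 1/((k:ℝ)+1)))) q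
        linarith [h]
      have hb : ((k:ℝ) + q) / ((k:ℝ)+1) ≤ 1 + (q:ℝ) * (1/((k:ℝ)+1)) := by
        rw [div_le_iff₀ hk1]; field_simp; linarith
      rw [e1, mul_pow]
      have := hb.trans ha
      exact mul_le_mul_of_nonneg_left this (by positivity)
    calc |acoef α (k+1)| = |acoef α k| * (|(k:ℝ) - α| / ((k:ℝ)+1)) := h1
      _ ≤ ((k:ℝ)+1)^q * (((k:ℝ) + q) / ((k:ℝ)+1)) := by
          have h5 : |(k:ℝ) - α| / ((k:ℝ)+1) ≤ ((k:ℝ)+q)/((k:ℝ)+1) := by gcongr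
          exact mul_le_mul ih h5 (by positivity) (by positivity)
      _ ≤ ((k:ℝ)+2)^q := key
      _ = (((k:ℝ)+1)+1)^q := by ring_nf
      _ = ((↑(k+1):ℝ)+1)^q := by push_cast; ring_nf

lemma factor_le (α : ℝ) (hα : -1 < α) (i : ℕ) (hi : α ≤ i) :
    ((i:ℝ) - α)/((i:ℝ)+1) ≤ (((i:ℝ)+1)/((i:ℝ)+2)) ^ (α+1) := by
  have h1 : (0:ℝ) < (i:ℝ)+1 := by positivity
  have h2 : (0:ℝ) < (i:ℝ)+2 := by positivity
  have hb : (0:ℝ) < ((i:ℝ)+1)/((i:ℝ)+2) := by positivity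
  rw [Real.rpow_def_of_pos hb]
  have hL : -(1/((i:ℝ)+1)) ≤ Real.log (((i:ℝ)+1)/((i:ℝ)+2)) := by
    have h3 := Real.log_le_sub_one_of_pos (x := ((i:ℝ)+2)/((i:ℝ)+1)) (by positivity)
    have h4 : Real.log (((i:ℝ)+1)/((i:ℝ)+2)) = - Real.log (((i:ℝ)+2)/((i:ℝ)+1)) := by
      rw [← Real.log_inv]; congr 1; field_simp
    have h5 : ((i:ℝ)+2)/((i:ℝ)+1) - 1 = 1/((i:ℝ)+1) := by field_simp; norm_num
    rw [h4]; linarith [h3, h5 ▸ h3]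
  have hmul : -((α+1)/((i:ℝ)+1)) ≤ Real.log (((i:ℝ)+1)/((i:ℝ)+2)) * (α+1) := by
    have := mul_le_mul_of_nonneg_right hL (by linarith : (0:ℝ) ≤ α+1)
    calc -((α+1)/((i:ℝ)+1)) = -(1/((i:ℝ)+1)) * (α+1) := by ring
      _ ≤ _ := this
  have hexp := Real.add_one_le_exp (Real.log (((i:ℝ)+1)/((i:ℝ)+2)) * (α+1))
  have heq : ((i:ℝ) - α)/((i:ℝ)+1) = 1 - (α+1)/((i:ℝ)+1) := by field_simp; ring
  rw [heq]; linarith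

lemma decay (α : ℝ) (hα : -1 < α) (k : ℕ) (hk : ⌈α⌉₊ ≤ k) :
    |acoef α k| ≤ |acoef α ⌈α⌉₊| * (((⌈α⌉₊:ℝ)+1)/((k:ℝ)+1)) ^ (α+1) := by
  induction k, hk using Nat.le_induction with
  | base =>
    have : (((⌈α⌉₊:ℝ)+1)/((⌈α⌉₊:ℝ)+1)) = 1 := by
      rw [div_self]; positivity
    rw [this, Real.one_rpow, mul_one]
  | succ k hk ih =>
    have hαk : α ≤ (k:ℝ) := le_trans (Nat.le_ceil α) (by exact_mod_cast hk)
    have h1 : (0:ℝ) < (k:ℝ)+1 := by positivity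
    have habs : |acoef α (k+1)| = |acoef α k| * (((k:ℝ) - α)/((k:ℝ)+1)) := by
      rw [acoef_succ, abs_mul, abs_of_nonneg (div_nonneg (by linarith) h1.le)]
    calc |acoef α (k+1)| = |acoef α k| * (((k:ℝ) - α)/((k:ℝ)+1)) := habs
      _ ≤ (|acoef α ⌈α⌉₊| * (((⌈α⌉₊:ℝ)+1)/((k:ℝ)+1)) ^ (α+1)) *
            ((((k:ℝ)+1)/((k:ℝ)+2)) ^ (α+1)) :=
          mul_le_mul ih (factor_le α hα k hαk) (div_nonneg (by linarith) h1.le)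
            (by positivity)
      _ = |acoef α ⌈α⌉₊| * ((((⌈α⌉₊:ℝ)+1)/((k:ℝ)+1)) * (((k:ℝ)+1)/((k:ℝ)+2))) ^ (α+1) := by
          rw [mul_assoc, ← Real.mul_rpow (by positivity) (by positivity)]
      _ = |acoef α ⌈α⌉₊| * (((⌈α⌉₊:ℝ)+1)/((k:ℝ)+2)) ^ (α+1) := by
          congr 2; field_simp
      _ = |acoef α ⌈α⌉₊| * (((⌈α⌉₊:ℝ)+1)/(((k+1:ℕ):ℝ)+1)) ^ (α+1) := by
          congr 3; push_cast; ring

lemma summable_abs_acoef_div (α : ℝ) (hα : -1 < α) (c : ℝ) :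
    Summable (fun k : ℕ => |acoef α k / ((k:ℝ) + c)|) := by
  set K : ℕ := max ⌈α⌉₊ (⌈2*|c|⌉₊ + 1) with hK
  rw [← summable_nat_add_iff K]
  set A : ℝ := |acoef α ⌈α⌉₊| * ((⌈α⌉₊:ℝ)+1) ^ (α+1) with hA
  have hsum : Summable (fun k : ℕ => 4 * A * (((k+K:ℕ):ℝ)+1) ^ (-(α+2))) := by
    apply Summable.mul_left
    have h0 : Summable (fun n : ℕ => ((n:ℝ)) ^ (-(α+2))) :=
      Real.summable_nat_rpow.2 (by linarith)
    have h1 := (summable_nat_add_iff (K+1)).2 h0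
    apply h1.congr
    intro n; congr 1; push_cast; ring
  apply Summable.of_nonneg_of_le (fun k => abs_nonneg _) _ hsum
  intro k
  set m : ℕ := k + K with hm
  have hm1 : ⌈α⌉₊ ≤ m := le_trans (le_max_left _ _) (Nat.le_add_left _ _)
  have hm2 : 2*|c| + 1 ≤ (m:ℝ) := by
    have : (⌈2*|c|⌉₊ + 1 : ℕ) ≤ m := le_trans (le_max_right _ _) (Nat.le_add_left _ _)
    have h2 := Nat.le_ceil (2*|c|)
    calc 2*|c| + 1 ≤ (⌈2*|c|⌉₊:ℝ) + 1 := by linarith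
      _ = ((⌈2*|c|⌉₊ + 1 : ℕ):ℝ) := by push_cast; ring
      _ ≤ (m:ℝ) := by exact_mod_cast this
  have hden : ((m:ℝ)+1)/4 ≤ |(m:ℝ) + c| := by
    have h3 : |c| ≤ ((m:ℝ) - 1)/2 := by linarith
    have h4 : -((m:ℝ)-1)/2 ≤ c ∧ c ≤ ((m:ℝ)-1)/2 := abs_le.1 (by linarith) |>.imp (by intro h; linarith) id
    rw [abs_of_nonneg (by linarith [h4.1] : (0:ℝ) ≤ (m:ℝ) + c)]
    linarith [h4.1]
  have hdec := decay α hα m hm1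
  have hmpos : (0:ℝ) < (m:ℝ) + 1 := by positivity
  have habs : |acoef α m / ((m:ℝ) + c)| = |acoef α m| / |(m:ℝ) + c| := abs_div _ _
  rw [habs]
  have hnum : |acoef α m| ≤ A * ((m:ℝ)+1) ^ (-(α+1)) := by
    have : (((⌈α⌉₊:ℝ)+1)/((m:ℝ)+1)) ^ (α+1)
        = ((⌈α⌉₊:ℝ)+1) ^ (α+1) * ((m:ℝ)+1) ^ (-(α+1)) := by
      rw [Real.div_rpow (by positivity) (by positivity), Real.rpow_neg hmpos.le]
      rw [div_eq_mul_inv]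
    rw [this, ← mul_assoc] at hdec
    exact hdec
  have hfrac : |acoef α m| / |(m:ℝ) + c| ≤ (A * ((m:ℝ)+1) ^ (-(α+1))) / (((m:ℝ)+1)/4) := by
    apply div_le_div₀ (by positivity) hnum (by positivity) hden
  refine hfrac.trans (le_of_eq ?_)
  have hrw : ((m:ℝ)+1) ^ (-(α+2)) = ((m:ℝ)+1) ^ (-(α+1)) * ((m:ℝ)+1)⁻¹ := by
    rw [show (-(α+2)) = (-(α+1)) + (-1) by ring, Real.rpow_add hmpos, Real.rpow_neg_one]
  rw [hrw]
  field_simp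

lemma onesub_hasDerivAt (p : ℝ) {t : ℝ} (ht : t < 1) :
    HasDerivAt (fun u : ℝ => (1 - u) ^ p) (-(p * (1 - t) ^ (p - 1))) t := by
  have h1 : (1:ℝ) - t ≠ 0 := by intro h; linarith [h]
  have h2 := Real.hasDerivAt_rpow_const (x := 1 - t) (p := p) (Or.inl h1)
  have h3 : HasDerivAt (fun u : ℝ => 1 - u) (-1) t := by
    simpa using (hasDerivAt_id t).const_sub 1
  have := h2.comp t h3
  exact this.congr_deriv (by ring)

lemma iter_deriv_onesub (α : ℝ) {x : ℝ} (hx0 : 0 < x) (hx1 : x < 1) (n : ℕ) :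
    ∀ t ∈ Icc (0:ℝ) x, iteratedDerivWithin n (fun u : ℝ => (1-u)^α) (Icc 0 x) t
      = rpoch (-α) n * (1-t) ^ (α - n) := by
  induction n with
  | zero =>
    intro t ht
    simp [rpoch, iteratedDerivWithin_zero]
  | succ n ih =>
    intro t ht
    have hud : UniqueDiffOn ℝ (Icc (0:ℝ) x) := uniqueDiffOn_Icc hx0
    rw [iteratedDerivWithin_succ]
    have hcongr : derivWithin (iteratedDerivWithin n (fun u : ℝ => (1-u)^α) (Icc 0 x))
        (Icc 0 x) t
        = derivWithin (fun u : ℝ => rpoch (-α) n * (1-u) ^ (α - n)) (Icc 0 x) t := by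
      apply derivWithin_congr
      · intro u hu; exact ih u hu
      · exact ih t ht
    rw [hcongr]
    have ht1 : t < 1 := lt_of_le_of_lt ht.2 hx1
    have hda : HasDerivAt (fun u : ℝ => rpoch (-α) n * (1-u) ^ (α - n))
        (rpoch (-α) n * -((α - n) * (1-t) ^ (α - n - 1))) t :=
      (onesub_hasDerivAt (α - n) ht1).const_mul _
    rw [(hda.hasDerivWithinAt).derivWithin (hud t ht)]
    rw [rpoch_succ]
    have : α - ↑n - 1 = α - ↑(n+1) := by push_cast; ring
    rw [this]
    ring

lemma contDiffOn_onesub (α : ℝ) (n : ℕ) {x : ℝ} (hx1 : x < 1) :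
    ContDiffOn ℝ n (fun u : ℝ => (1-u)^α) (Icc (0:ℝ) x) := by
  intro t ht
  have ht1 : t < 1 := lt_of_le_of_lt ht.2 hx1
  have h1 : (1:ℝ) - t ≠ 0 := by intro h; linarith [h]
  have h2 : ContDiffAt ℝ n (fun y : ℝ => y ^ α) (1 - t) :=
    Real.contDiffAt_rpow_const_of_ne h1
  have h3 : ContDiffAt ℝ n (fun u : ℝ => 1 - u) t := by
    exact (contDiff_const.sub contDiff_id).contDiffAt
  exact (h2.comp t h3).contDiffWithinAt

lemma binomial_hasSum (α : ℝ) {x : ℝ} (hx0 : 0 < x) (hx1 : x < 1) :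
    HasSum (fun k : ℕ => acoef α k * x ^ k) ((1-x)^α) := by
  set q : ℕ := ⌈|α|⌉₊ with hq
  have hqa : |α| ≤ (q:ℝ) := Nat.le_ceil _
  -- summability
  have hsummaj : Summable (fun k : ℕ => (((k:ℝ)+1)) ^ q * x ^ k) := by
    have h0 : Summable (fun k : ℕ => ((k:ℝ)) ^ q * x ^ k) :=
      summable_pow_mul_geometric_of_norm_lt_one q (by rw [Real.norm_eq_abs, abs_of_pos hx0]; exact hx1)
    have h1 := (summable_nat_add_iff 1).2 h0
    have h2 : Summable (fun k : ℕ => (1/x) * ((((k+1:ℕ)):ℝ) ^ q * x ^ (k+1))) := h1.mul_left _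
    apply h2.congr
    intro k
    push_cast
    field_simp
    ring
  have hsum : Summable (fun k : ℕ => acoef α k * x ^ k) := by
    apply Summable.of_norm
    apply hsummaj.of_nonneg_of_le (fun k => norm_nonneg _)
    intro k
    rw [Real.norm_eq_abs, abs_mul, abs_pow, abs_of_pos hx0]
    exact mul_le_mul_of_nonneg_right (abs_acoef_le_poly α q hqa k) (pow_nonneg hx0.le k)
  -- Taylor remainder bound
  set f : ℝ → ℝ := fun u => (1-u)^α with hf
  set M : ℝ := max ((1-x) ^ (α-1)) 1 with hM
  have hrem : ∀ n : ℕ, |f x - ∑ k ∈ Finset.range (n+1), acoef α k * x ^ k|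
      ≤ (M * x) * (((n:ℝ)+1) * (((n:ℝ)+2)^q * x ^ n)) := by
    intro n
    have hud : UniqueDiffOn ℝ (Icc (0:ℝ) x) := uniqueDiffOn_Icc hx0
    have hdiff : DifferentiableOn ℝ (iteratedDerivWithin n f (Icc 0 x)) (Ioo 0 x) := by
      apply DifferentiableOn.congr (f := fun t : ℝ => rpoch (-α) n * (1-t)^(α-n))
      · intro t ht
        have ht1 : t < 1 := lt_of_lt_of_le ht.2 hx1.le
        exact (((onesub_hasDerivAt (α - n) ht1).const_mul
          (rpoch (-α) n)).differentiableAt).differentiableWithinAt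
      · intro t ht
        exact iter_deriv_onesub α hx0 hx1 n t (Ioo_subset_Icc_self ht)
    obtain ⟨ξ, hξ, hre⟩ := taylor_mean_remainder_cauchy (f := f) (x₀ := 0) (x := x) hx0.ne
      (by rw [uIcc_of_le hx0.le]; exact contDiffOn_onesub α n hx1)
      (by rw [uIcc_of_le hx0.le, uIoo_of_le hx0.le]; exact hdiff)
    rw [uIoo_of_le hx0.le] at hξ
    rw [uIcc_of_le hx0.le] at hre
    have hξI : ξ ∈ Icc (0:ℝ) x := Ioo_subset_Icc_self hξ
    have hξ1 : (0:ℝ) < 1 - ξ := by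
      have : ξ < 1 := lt_of_lt_of_le hξ.2 hx1.le
      linarith
    have h1x : (0:ℝ) < 1 - x := by linarith
    -- Taylor polynomial = partial sum
    have hT : taylorWithinEval f n (Icc 0 x) 0 x = ∑ k ∈ Finset.range (n+1), acoef α k * x ^ k := by
      rw [taylor_within_apply]
      apply Finset.sum_congr rfl
      intro k _
      have h0I : (0:ℝ) ∈ Icc (0:ℝ) x := ⟨le_refl _, hx0.le⟩
      rw [iter_deriv_onesub α hx0 hx1 k 0 h0I]
      have : ((1:ℝ) - 0) ^ (α - (k:ℝ)) = 1 := by norm_num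
      rw [this, smul_eq_mul]
      simp only [acoef, sub_zero]
      field_simp
    rw [hT] at hre
    -- iterated derivative at ξ
    rw [iter_deriv_onesub α hx0 hx1 (n+1) ξ hξI] at hre
    rw [hre]
    -- bound pieces
    have hpow1 : ((1:ℝ)-ξ) ^ (α - ((n+1:ℕ):ℝ)) = (1-ξ)^(α-1) * ((1-ξ)^n)⁻¹ := by
      rw [show α - ((n+1:ℕ):ℝ) = (α - 1) + (-(n:ℝ)) by push_cast; ring,
        Real.rpow_add hξ1, Real.rpow_neg hξ1.le, Real.rpow_natCast]
    have hB1 : ((1:ℝ)-ξ) ^ (α - ((n+1:ℕ):ℝ)) * (x - ξ)^n ≤ M * x ^ n := by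
      rw [hpow1]
      have hq1 : ((1-ξ)^n : ℝ)⁻¹ * (x-ξ)^n = ((x-ξ)/(1-ξ))^n := by
        rw [div_pow]; ring
      rw [mul_assoc, hq1]
      have hfr : (x-ξ)/(1-ξ) ≤ x := by
        rw [div_le_iff₀ hξ1]
        nlinarith [hξ.1, hξ.2, hx1]
      have hfr0 : (0:ℝ) ≤ (x-ξ)/(1-ξ) := div_nonneg (by linarith [hξ.2]) hξ1.le
      have hp2 : ((x-ξ)/(1-ξ))^n ≤ x^n := pow_le_pow_left₀ hfr0 hfr n
      have hMb : ((1:ℝ)-ξ) ^ (α-1) ≤ M := by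
        rcases le_or_gt 1 α with hc | hc
        · refine le_trans (Real.rpow_le_one (by linarith) (by linarith [hξ.1]) (by linarith)) ?_
          exact le_max_right _ _
        · refine le_trans (Real.rpow_le_rpow_of_nonpos h1x (by linarith [hξ.2]) (by linarith)) ?_
          exact le_max_left _ _
      have : (0:ℝ) ≤ (1-ξ)^(α-1) := Real.rpow_nonneg hξ1.le _
      exact mul_le_mul hMb hp2 (pow_nonneg hfr0 n) (le_trans this hMb)
    have hB2 : |rpoch (-α) (n+1)| / (n.factorial : ℝ) ≤ ((n:ℝ)+1) * ((n:ℝ)+2)^q := by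
      have ha : acoef α (n+1) = rpoch (-α) (n+1) / ((n+1).factorial : ℝ) := rfl
      have hfac : (((n+1).factorial : ℕ) : ℝ) = ((n:ℝ)+1) * (n.factorial : ℝ) := by
        rw [Nat.factorial_succ]; push_cast; ring
      have hb := abs_acoef_le_poly α q hqa (n+1)
      have hcast : (((n+1:ℕ)):ℝ) + 1 = (n:ℝ)+2 := by push_cast; ring
      rw [hcast] at hb
      have hfn : (0:ℝ) < (n.factorial : ℝ) := by exact_mod_cast n.factorial_pos
      have : |rpoch (-α) (n+1)| = |acoef α (n+1)| * (((n:ℝ)+1) * (n.factorial : ℝ)) := by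
        rw [ha, abs_div, abs_of_pos (by positivity : (0:ℝ) < (((n+1).factorial : ℕ) : ℝ))]
        rw [hfac]
        field_simp
      rw [this]
      rw [div_le_iff₀ hfn]
      calc |acoef α (n+1)| * (((n:ℝ)+1) * (n.factorial : ℝ))
          ≤ ((n:ℝ)+2)^q * (((n:ℝ)+1) * (n.factorial : ℝ)) :=
            mul_le_mul_of_nonneg_right hb (by positivity)
        _ = ((n:ℝ)+1) * ((n:ℝ)+2)^q * (n.factorial : ℝ) := by ring
    -- assemble
    have habs : |rpoch (-α) (n+1) * (1-ξ) ^ (α - ((n+1:ℕ):ℝ)) * (x - ξ)^n / (n.factorial : ℝ) * (x - 0)|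
        = (|rpoch (-α) (n+1)| / (n.factorial : ℝ)) * ((1-ξ) ^ (α - ((n+1:ℕ):ℝ)) * (x - ξ)^n) * x := by
      rw [abs_mul, abs_div, abs_mul, abs_mul]
      rw [abs_of_nonneg (Real.rpow_nonneg hξ1.le _), abs_of_nonneg (pow_nonneg (by linarith [hξ.2] : (0:ℝ) ≤ x - ξ) n),
        abs_of_nonneg (by linarith : (0:ℝ) ≤ x - 0),
        abs_of_pos (by exact_mod_cast n.factorial_pos : (0:ℝ) < (n.factorial : ℝ))]
      ring
    rw [habs]
    have hM0 : (0:ℝ) ≤ M := le_trans zero_le_one (le_max_right _ _)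
    calc (|rpoch (-α) (n+1)| / (n.factorial : ℝ)) * ((1-ξ) ^ (α - ((n+1:ℕ):ℝ)) * (x - ξ)^n) * x
        ≤ (((n:ℝ)+1) * ((n:ℝ)+2)^q) * (M * x ^ n) * x := by
          apply mul_le_mul_of_nonneg_right _ hx0.le
          apply mul_le_mul hB2 hB1
          · exact mul_nonneg (Real.rpow_nonneg hξ1.le _) (pow_nonneg (by linarith [hξ.2]) n)
          · positivity
      _ = (M * x) * (((n:ℝ)+1) * (((n:ℝ)+2)^q * x ^ n)) := by ring
  -- limit
  have htend0 : Filter.Tendsto (fun n : ℕ => (M * x) * (((n:ℝ)+1) * (((n:ℝ)+2)^q * x ^ n)))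
      Filter.atTop (nhds 0) := by
    have hgb : ∀ n : ℕ, ((n:ℝ)+1) * (((n:ℝ)+2)^q * x ^ n)
        ≤ (1/x^2) * ((((n+2:ℕ)):ℝ)^(q+1) * x ^ (n+2)) := by
      intro n
      have h1 : (((n+2:ℕ)):ℝ) = (n:ℝ)+2 := by push_cast; ring
      rw [h1]
      have h2 : ((n:ℝ)+2)^(q+1) = ((n:ℝ)+2)^q * ((n:ℝ)+2) := by ring
      have h3 : (1/x^2) * ((((n:ℝ)+2)^q * ((n:ℝ)+2)) * x ^ (n+2))
          = (((n:ℝ)+2) * (((n:ℝ)+2)^q * x ^ n)) := by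
        field_simp
        ring
      rw [h2, h3]
      have : ((n:ℝ)+1) ≤ ((n:ℝ)+2) := by linarith
      exact mul_le_mul_of_nonneg_right this (by positivity)
    have hv := tendsto_pow_const_mul_const_pow_of_abs_lt_one (q+1)
      (by rw [abs_of_pos hx0]; exact hx1 : |x| < 1)
    have hw : Filter.Tendsto (fun n : ℕ => ((((n+2:ℕ)):ℝ))^(q+1) * x ^ (n+2))
        Filter.atTop (nhds 0) := hv.comp (Filter.tendsto_add_atTop_nat 2)
    have hw2 := hw.const_mul (1/x^2)
    rw [mul_zero] at hw2
    have hg : Filter.Tendsto (fun n : ℕ => ((n:ℝ)+1) * (((n:ℝ)+2)^q * x ^ n))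
        Filter.atTop (nhds 0) := by
      apply squeeze_zero (fun n => by positivity) hgb hw2
    have := hg.const_mul (M * x)
    rwa [mul_zero] at this
  have htends : Filter.Tendsto (fun n : ℕ => ∑ k ∈ Finset.range (n+1), acoef α k * x ^ k)
      Filter.atTop (nhds (f x)) := by
    rw [tendsto_iff_dist_tendsto_zero]
    apply squeeze_zero (fun n => dist_nonneg) _ htend0
    intro n
    rw [Real.dist_eq, ← abs_neg]
    simpa [neg_sub] using hrem n
  have htsum := hsum.hasSum.tendsto_sum_nat
  have htsum' : Filter.Tendsto (fun n : ℕ => ∑ k ∈ Finset.range (n+1), acoef α k * x ^ k)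
      Filter.atTop (nhds (∑' k, acoef α k * x ^ k)) :=
    htsum.comp (Filter.tendsto_add_atTop_nat 1)
  have heq := tendsto_nhds_unique htsum' htends
  have : f x = (1-x)^α := rfl
  rw [this] at heq
  exact heq ▸ hsum.hasSum

lemma real_beta (u v : ℝ) (hu : 0 < u) (hv : 0 < v) :
    ∫ t in (0:ℝ)..1, t ^ (u-1) * (1-t) ^ (v-1)
      = Real.Gamma u * Real.Gamma v / Real.Gamma (u+v) := by
  have hc := Complex.Gamma_mul_Gamma_eq_betaIntegral
    (s := (u:ℂ)) (t := (v:ℂ)) (by simpa using hu) (by simpa using hv)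
  have hB : Complex.betaIntegral (u:ℂ) (v:ℂ)
      = ((∫ t in (0:ℝ)..1, t ^ (u-1) * (1-t) ^ (v-1) : ℝ) : ℂ) := by
    rw [Complex.betaIntegral]
    rw [← intervalIntegral.integral_ofReal]
    apply intervalIntegral.integral_congr
    intro t ht
    rw [Set.uIcc_of_le (by norm_num : (0:ℝ) ≤ 1)] at ht
    have h0t : 0 ≤ t := ht.1
    have ht1 : 0 ≤ 1 - t := by linarith [ht.2]
    simp only
    rw [Complex.ofReal_mul, Complex.ofReal_cpow h0t, Complex.ofReal_cpow ht1]
    push_cast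
    ring
  rw [hB] at hc
  have huv : Complex.Gamma ((u:ℂ) + (v:ℂ)) = ((Real.Gamma (u+v) : ℝ) : ℂ) := by
    rw [← Complex.ofReal_add, Complex.Gamma_ofReal]
  rw [huv, Complex.Gamma_ofReal, Complex.Gamma_ofReal] at hc
  have hne : Real.Gamma (u+v) ≠ 0 := (Real.Gamma_pos_of_pos (by linarith)).ne'
  have := hc
  rw [← Complex.ofReal_mul, ← Complex.ofReal_mul] at this
  have hr : Real.Gamma u * Real.Gamma v = Real.Gamma (u+v) * ∫ t in (0:ℝ)..1, t ^ (u-1) * (1-t) ^ (v-1) :=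
    Complex.ofReal_injective this
  field_simp [hne] at hr ⊢
  linarith [hr]

lemma integral_rpow_Ioo (p : ℝ) (hp : -1 < p) :
    ∫ x in Ioo (0:ℝ) 1, x ^ p = 1/(p+1) := by
  have h1 : ∫ x in (0:ℝ)..1, x ^ p = (1 ^ (p+1) - (0:ℝ) ^ (p+1)) / (p+1) :=
    integral_rpow (Or.inl hp)
  rw [Real.one_rpow, Real.zero_rpow (by linarith : p + 1 ≠ 0)] at h1
  rw [intervalIntegral.integral_of_le (by norm_num : (0:ℝ) ≤ 1)] at h1
  rw [← MeasureTheory.integral_Ioc_eq_integral_Ioo]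
  rw [h1]
  ring

lemma integrable_term (α : ℝ) (c : ℝ) (hc : 0 < c) (k : ℕ) :
    IntegrableOn (fun x : ℝ => acoef α k * x ^ ((k:ℝ) + c - 1)) (Ioo 0 1) := by
  have h1 : IntervalIntegrable (fun x : ℝ => x ^ ((k:ℝ) + c - 1)) volume 0 1 :=
    intervalIntegral.intervalIntegrable_rpow' (by push_cast; linarith)
  have h2 : IntegrableOn (fun x : ℝ => x ^ ((k:ℝ) + c - 1)) (Ioc 0 1) :=
    (intervalIntegrable_iff_integrableOn_Ioc_of_le (by norm_num)).1 h1
  exact (h2.mono_set Ioo_subset_Ioc_self).const_mul _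

lemma base_case (α : ℝ) (hα : -1 < α) (c : ℝ) (hc : 0 < c) :
    ∑' k : ℕ, acoef α k / ((k:ℝ) + c)
      = Real.Gamma c * Real.Gamma (α+1) / Real.Gamma (c+α+1) := by
  set F : ℕ → ℝ → ℝ := fun k x => acoef α k * x ^ ((k:ℝ) + c - 1) with hF
  have hkc : ∀ k : ℕ, (0:ℝ) < (k:ℝ) + c := fun k => by positivity
  have hint : ∀ k : ℕ, ∫ x in Ioo (0:ℝ) 1, F k x = acoef α k / ((k:ℝ) + c) := by
    intro k
    rw [MeasureTheory.integral_const_mul, integral_rpow_Ioo _ (by linarith [hkc k])]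
    field_simp
    rw [sub_add_cancel, mul_div_assoc, div_self (hkc k).ne', mul_one]
  have hnorm : ∀ k : ℕ, ∫ x in Ioo (0:ℝ) 1, ‖F k x‖ = |acoef α k| / ((k:ℝ) + c) := by
    intro k
    have : EqOn (fun x => ‖F k x‖) (fun x => |acoef α k| * x ^ ((k:ℝ) + c - 1)) (Ioo 0 1) := by
      intro x hx
      simp only [hF, Real.norm_eq_abs, abs_mul]
      rw [abs_of_nonneg (Real.rpow_nonneg hx.1.le _)]
    rw [MeasureTheory.setIntegral_congr_fun measurableSet_Ioo this,
      MeasureTheory.integral_const_mul, integral_rpow_Ioo _ (by linarith [hkc k])]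
    field_simp
    rw [sub_add_cancel, mul_div_assoc, div_self (hkc k).ne', mul_one]
  have hsummable : Summable (fun k : ℕ => ∫ x in Ioo (0:ℝ) 1, ‖F k x‖) := by
    have h := summable_abs_acoef_div α hα c
    apply h.congr
    intro k
    rw [hnorm k, abs_div, abs_of_pos (hkc k)]
  have hswap := MeasureTheory.integral_tsum_of_summable_integral_norm
    (fun k => integrable_term α c hc k) hsummable
  have hts : ∑' k : ℕ, acoef α k / ((k:ℝ) + c) = ∫ x in Ioo (0:ℝ) 1, (∑' k : ℕ, F k x) := by
    rw [← hswap]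
    exact tsum_congr fun k => (hint k).symm
  rw [hts]
  have hpt : EqOn (fun x : ℝ => ∑' k : ℕ, F k x)
      (fun x : ℝ => x ^ (c-1) * (1-x) ^ ((α+1)-1)) (Ioo 0 1) := by
    intro x hx
    have hx0 := hx.1
    have hx1 := hx.2
    simp only [hF]
    have h1 : ∀ k : ℕ, acoef α k * x ^ ((k:ℝ) + c - 1) = (acoef α k * x ^ k) * x ^ (c-1) := by
      intro k
      rw [show (k:ℝ) + c - 1 = (k:ℝ) + (c-1) by ring, Real.rpow_add hx0,
        Real.rpow_natCast]
      ring
    simp only [h1]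
    rw [tsum_mul_right, (binomial_hasSum α hx0 hx1).tsum_eq]
    rw [show (α+1)-1 = α by ring]
    ring
  rw [MeasureTheory.setIntegral_congr_fun measurableSet_Ioo hpt]
  rw [← MeasureTheory.integral_Ioc_eq_integral_Ioo,
    ← intervalIntegral.integral_of_le (by norm_num : (0:ℝ) ≤ 1)]
  rw [real_beta c (α+1) hc (by linarith)]
  ring_nf

lemma summable_acoef_div (α : ℝ) (hα : -1 < α) (c : ℝ) :
    Summable (fun k : ℕ => acoef α k / ((k:ℝ) + c)) :=
  (summable_abs_acoef_div α hα c).of_abs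

lemma g_one (α : ℝ) (hα : -1 < α) :
    ∑' k : ℕ, acoef α k / ((k:ℝ) + 1) = 1/(α+1) := by
  rw [base_case α hα 1 one_pos, Real.Gamma_one]
  have hα1 : α + 1 ≠ 0 := by linarith
  have h2 : (1:ℝ) + α + 1 = (α+1) + 1 := by ring
  rw [h2, Real.Gamma_add_one hα1]
  have hγ : Real.Gamma (α+1) ≠ 0 := (Real.Gamma_pos_of_pos (by linarith)).ne'
  field_simp

lemma g_rec (α : ℝ) (hα : -1 < α) (c : ℝ) (hc : ∀ k : ℕ, (k:ℝ) + c ≠ 0) :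
    ∑' k : ℕ, acoef α k / ((k:ℝ) + c)
      = ((c+α+1)/c) * ∑' k : ℕ, acoef α k / ((k:ℝ) + (c+1)) := by
  have hc0 : c ≠ 0 := by have := hc 0; simpa using this
  have hS1 : Summable (fun k : ℕ => acoef α k / ((k:ℝ) + 1)) := summable_acoef_div α hα 1
  have hSc1 : Summable (fun k : ℕ => acoef α k / ((k:ℝ) + (c+1))) :=
    summable_acoef_div α hα (c+1)
  have hSc : Summable (fun k : ℕ => acoef α k / ((k:ℝ) + c)) := summable_acoef_div α hα c
  have hsplit : ∀ k : ℕ, acoef α (k+1) / (((k+1:ℕ):ℝ) + c)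
      = (-(1+α)/c) * (acoef α k / ((k:ℝ)+1)) + ((c+α+1)/c) * (acoef α k / ((k:ℝ)+(c+1))) := by
    intro k
    have hk1 : ((k:ℝ)+1) ≠ 0 := by positivity
    have hkc : ((k:ℝ)+(c+1)) ≠ 0 := by
      have h := hc (k+1); push_cast at h; intro hcon; apply h; linarith
    have hkc' : ((k:ℝ)+1+c) ≠ 0 := by intro h; exact hkc (by linarith)
    rw [acoef_succ]
    push_cast
    field_simp [hk1, hkc, hkc', hc0]
    ring
  rw [Summable.tsum_eq_zero_add hSc]
  rw [tsum_congr hsplit]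
  rw [Summable.tsum_add ((hS1.mul_left _)) ((hSc1.mul_left _)), tsum_mul_left, tsum_mul_left]
  rw [g_one α hα, acoef_zero]
  have hγ : α + 1 ≠ 0 := by linarith
  field_simp
  linear_combination (α + 1) * (mul_inv_cancel₀ hc0)

lemma denom_ne (γ : ℝ) (hγ0 : 0 < γ) (hγ1 : γ < 1) (m : ℕ) (k : ℕ) :
    (k:ℝ) + (γ - m) ≠ 0 := by
  intro h
  rcases le_or_gt ((m:ℝ)) (k:ℝ) with hle | hlt
  · linarith
  · have hkm : k < m := by exact_mod_cast hlt
    have hkm1 : (k:ℝ) + 1 ≤ (m:ℝ) := by exact_mod_cast Nat.succ_le_of_lt hkm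
    linarith

lemma Gamma_shift (x : ℝ) (n : ℕ) (h : ∀ j : ℕ, j < n → x + j ≠ 0) :
    Real.Gamma (x + n) = (∏ j ∈ Finset.range n, (x + j)) * Real.Gamma x := by
  induction n with
  | zero => simp
  | succ n ih =>
    have h1 : x + ((n+1:ℕ):ℝ) = (x + n) + 1 := by push_cast; ring
    rw [h1, Real.Gamma_add_one (h n (Nat.lt_succ_self n)), ih (fun j hj => h j (hj.trans (Nat.lt_succ_self n))),
      Finset.prod_range_succ]
    ring

lemma g_formula (α : ℝ) (hα : -1 < α) (γ : ℝ) (hγ0 : 0 < γ) (hγ1 : γ < 1) (m : ℕ) :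
    ∑' k : ℕ, acoef α k / ((k:ℝ) + (γ - m))
      = (∏ j ∈ Finset.range m, ((γ - m + j + α + 1)/(γ - m + j)))
        * (Real.Gamma γ * Real.Gamma (α+1) / Real.Gamma (γ+α+1)) := by
  induction m with
  | zero =>
    simp only [Nat.cast_zero, sub_zero, Finset.range_zero, Finset.prod_empty, one_mul]
    exact base_case α hα γ hγ0
  | succ m ih =>
    have hc := denom_ne γ hγ0 hγ1 (m+1)
    rw [g_rec α hα (γ - ((m+1:ℕ):ℝ)) hc]
    have h1 : γ - ((m+1:ℕ):ℝ) + 1 = γ - m := by push_cast; ring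
    rw [h1, ih]
    rw [Finset.prod_range_succ']
    have h2 : ∀ j ∈ Finset.range m,
        (γ - ((m+1:ℕ):ℝ) + ((j+1:ℕ):ℝ) + α + 1)/(γ - ((m+1:ℕ):ℝ) + ((j+1:ℕ):ℝ))
        = (γ - (m:ℝ) + j + α + 1)/(γ - (m:ℝ) + j) := by
      intro j _
      push_cast
      ring_nf
    rw [Finset.prod_congr rfl h2]
    push_cast
    ring

lemma key_prod (α : ℝ) (hα : -1 < α) (γ : ℝ) (hγ0 : 0 < γ) (hγ1 : γ < 1)
    (n : ℕ) (hne : ∀ k : ℕ, (k:ℝ) + (γ - n) ≠ 0) :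
    (∏ j ∈ Finset.range n, ((γ - n + j + α + 1)/(γ - n + j)))
      * (Real.Gamma γ * Real.Gamma (α+1) / Real.Gamma (γ+α+1))
      = Real.Gamma (α+1) * Real.Gamma (γ - n) / Real.Gamma (γ - n + α + 1) := by
  by_cases hcase : ∀ j : ℕ, j < n → γ - n + α + 1 + (j:ℝ) ≠ 0
  · have hPB : ∀ j : ℕ, j < n → γ - (n:ℝ) + (j:ℝ) ≠ 0 := by
      intro j _ h
      exact hne j (by linarith)
    have hF1 : Real.Gamma γ = (∏ j ∈ Finset.range n, (γ - (n:ℝ) + j)) * Real.Gamma (γ - n) := by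
      have h := Gamma_shift (γ - n) n hPB
      rw [show γ - (n:ℝ) + (n:ℝ) = γ by ring] at h
      exact h
    have hF2 : Real.Gamma (γ+α+1)
        = (∏ j ∈ Finset.range n, (γ - (n:ℝ) + α + 1 + j)) * Real.Gamma (γ - n + α + 1) := by
      have h := Gamma_shift (γ - n + α + 1) n (fun j hj hh => hcase j hj (by linarith))
      rw [show γ - (n:ℝ) + α + 1 + (n:ℝ) = γ + α + 1 by ring] at h
      exact h
    have hA0 : (∏ j ∈ Finset.range n, (γ - (n:ℝ) + α + 1 + (j:ℝ))) ≠ 0 :=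
      Finset.prod_ne_zero_iff.2 fun j hj => fun hh =>
        hcase j (Finset.mem_range.1 hj) (by linarith)
    have hB0 : (∏ j ∈ Finset.range n, (γ - (n:ℝ) + (j:ℝ))) ≠ 0 :=
      Finset.prod_ne_zero_iff.2 fun j hj => hPB j (Finset.mem_range.1 hj)
    have hGc0 : Real.Gamma (γ - n) ≠ 0 := by
      apply Real.Gamma_ne_zero
      intro m h
      exact hne m (by linarith)
    have hGc1 : Real.Gamma (γ - n + α + 1) ≠ 0 := by
      apply Real.Gamma_ne_zero
      intro m h
      have hmn : m < n := by
        by_contra hge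
        push_neg at hge
        have h2 : (n:ℝ) ≤ (m:ℝ) := by exact_mod_cast hge
        linarith
      exact hcase m hmn (by linarith)
    have hGga : Real.Gamma (γ+α+1) ≠ 0 := (Real.Gamma_pos_of_pos (by linarith)).ne'
    have hprod : (∏ j ∈ Finset.range n, ((γ - (n:ℝ) + j + α + 1)/(γ - (n:ℝ) + j)))
        = (∏ j ∈ Finset.range n, (γ - (n:ℝ) + α + 1 + (j:ℝ)))
          / (∏ j ∈ Finset.range n, (γ - (n:ℝ) + j)) := by
      rw [← Finset.prod_div_distrib]
      exact Finset.prod_congr rfl fun j _ => by ring_nf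
    rw [hprod, hF1, hF2]
    field_simp
  · push_neg at hcase
    obtain ⟨j, hjn, hj0⟩ := hcase
    have hzero : Real.Gamma (γ - n + α + 1) = 0 := by
      rw [show γ - (n:ℝ) + α + 1 = -(j:ℝ) by linarith]
      exact Real.Gamma_neg_nat_eq_zero j
    have hP0 : (∏ i ∈ Finset.range n, ((γ - (n:ℝ) + i + α + 1)/(γ - (n:ℝ) + i))) = 0 := by
      apply Finset.prod_eq_zero (Finset.mem_range.2 hjn)
      rw [show γ - (n:ℝ) + (j:ℝ) + α + 1 = 0 by linarith]
      simp
    rw [hP0, hzero, zero_mul, div_zero]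

/-- Evaluation of `∑_k (−α)_k/k! · 1/(2n+s−2k−d)`. -/
theorem stmt7 (d : ℕ) (hd : 1 ≤ d) (s α : ℝ) (h1 : (d : ℝ) - 2 < s) (h2 : s < d)
    (hα : -1 < α) (n : ℕ) :
    (∀ k : ℕ, 2 * (n : ℝ) + s - 2 * (k : ℝ) - d ≠ 0) ∧
    Summable (fun k : ℕ =>
      |rpoch (-α) k / (k.factorial : ℝ) * (1 / (2 * (n : ℝ) + s - 2 * (k : ℝ) - d))|) ∧
    ∑' k : ℕ, rpoch (-α) k / (k.factorial : ℝ) * (1 / (2 * (n : ℝ) + s - 2 * (k : ℝ) - d))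
      = -(Real.Gamma (α + 1) * Real.Gamma (((d : ℝ) - s) / 2 - n) /
          (2 * Real.Gamma (((d : ℝ) - s) / 2 - n + α + 1))) := by
  set γ : ℝ := ((d:ℝ) - s)/2 with hγ
  have hγ0 : 0 < γ := by rw [hγ]; linarith
  have hγ1 : γ < 1 := by rw [hγ]; linarith
  have hne : ∀ k : ℕ, (k:ℝ) + (γ - n) ≠ 0 := denom_ne γ hγ0 hγ1 n
  have hD : ∀ k : ℕ, 2 * (n:ℝ) + s - 2*(k:ℝ) - d = -2 * ((k:ℝ) + (γ - n)) := by
    intro k; rw [hγ]; ring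
  have hterm : ∀ k : ℕ, rpoch (-α) k / (k.factorial : ℝ) * (1 / (2 * (n:ℝ) + s - 2*(k:ℝ) - d))
      = (-1/2) * (acoef α k / ((k:ℝ) + (γ - n))) := by
    intro k
    have hx := hne k
    rw [hD k]
    show acoef α k * _ = _
    field_simp
  refine ⟨?_, ?_, ?_⟩
  · intro k h
    rw [hD k] at h
    exact hne k (by linarith)
  · have h2abs : ∀ k : ℕ,
        (1/2) * |acoef α k / ((k:ℝ) + (γ - n))|
        = |rpoch (-α) k / (k.factorial : ℝ) * (1 / (2 * (n:ℝ) + s - 2*(k:ℝ) - d))| := by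
      intro k
      rw [hterm k, abs_mul, show |(-1/2 : ℝ)| = 1/2 by rw [abs_of_nonpos (by norm_num)]; norm_num]
    exact ((summable_abs_acoef_div α hα (γ - n)).mul_left (1/2)).congr h2abs
  · rw [tsum_congr hterm, tsum_mul_left, g_formula α hα γ hγ0 hγ1 n,
      key_prod α hα γ hγ0 hγ1 n hne]
    ring
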